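/- Suppose Null(Φ) ∩ 𝒦 ∩ 𝒫 = {0}. Then every sequence (X_i)_{i∈ℕ} of real n×L matrices such that X_i ∈ 𝒦 ∩ 𝒫 and ‖Y − ΦX_i‖_F ≤ ‖Y‖_F for every i is bounded and has a convergent subsequence; moreover every such subsequential limit X* satisfies X* ∈ 𝒦 ∩ 𝒫 and ‖Y − ΦX*‖_F ≤ ‖Y‖_F. -/

import Mathlib

/-!
Write `S = 𝒦 ∩ 𝒫`. It is a closed cone, since bounding the number of nonzero coordinates is a
closed condition. As `Φ` has no zero on `S` other than `0`, the continuous function `‖Φ X‖` has a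
positive minimum `c` on the compact set `S ∩ {‖X‖ = 1}`, hence `c ‖X‖ ≤ ‖Φ X‖` on all of `S` by
homogeneity. So `‖Y - Φ X‖ ≤ ‖Y‖` forces `‖X‖ ≤ 2 ‖Y‖ / c`: the feasible set is closed and bounded,
and Bolzano–Weierstrass does the rest.
-/

/-- Frobenius norm of a real matrix. -/
noncomputable def frob {a b : ℕ} (A : Matrix (Fin a) (Fin b) ℝ) : ℝ :=
  Real.sqrt (∑ i, ∑ j, (A i j) ^ 2)

/-- The set of a×b matrices whose every column has at most k nonzero entries. -/
def colSparse (a b k : ℕ) : Set (Matrix (Fin a) (Fin b) ℝ) :=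
  {Θ | ∀ l, ({i | Θ i l ≠ 0} : Set (Fin a)).ncard ≤ k}

/-- The set of a×b matrices having at most p nonzero rows. -/
def rowSparse (a b p : ℕ) : Set (Matrix (Fin a) (Fin b) ℝ) :=
  {Θ | ({i | ∃ l, Θ i l ≠ 0} : Set (Fin a)).ncard ≤ p}

open Filter Topology
open scoped Matrix.Norms.Frobenius

theorem isClosed_setOf_ncard_support_le {ι M R : Type*} [Finite ι] [TopologicalSpace M]
    [TopologicalSpace R] [Zero R] [T1Space R] {g : ι → M → R} (hg : ∀ i, Continuous (g i))
    (k : ℕ) : IsClosed {x | {i | g i x ≠ 0}.ncard ≤ k} := by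
  -- near `x` the support can only grow, as each `{y | g i y ≠ 0}` is open
  simp_rw [← isOpen_compl_iff, Set.compl_ofPred, not_le]
  refine isOpen_iff_mem_nhds.2 fun x hx => ?_
  have hsupp : ∀ᶠ y in 𝓝 x, ∀ i, g i x ≠ 0 → g i y ≠ 0 :=
    eventually_all.2 fun i => by
      by_cases hi : g i x = 0
      · exact .of_forall fun _ h => absurd hi h
      · exact ((hg i).continuousAt.eventually_ne hi).mono fun _ hy _ => hy
  filter_upwards [hsupp] with y hy
  exact hx.trans_le (Set.ncard_le_ncard hy (Set.toFinite _))

theorem isClosed_colSparse (a b k : ℕ) : IsClosed (colSparse a b k) := by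
  simp only [colSparse, Set.ofPred_forall]
  exact isClosed_iInter fun l => isClosed_setOf_ncard_support_le (fun i => by fun_prop) k

theorem isClosed_rowSparse (a b p : ℕ) : IsClosed (rowSparse a b p) := by
  simp only [rowSparse, ← Function.ne_iff]
  exact isClosed_setOf_ncard_support_le (fun i => continuous_apply i) p

theorem smul_mem_colSparse {a b k : ℕ} {c : ℝ} (hc : c ≠ 0) {A : Matrix (Fin a) (Fin b) ℝ}
    (hA : A ∈ colSparse a b k) : c • A ∈ colSparse a b k := by
  simpa [colSparse, hc] using hA

theorem smul_mem_rowSparse {a b p : ℕ} {c : ℝ} (hc : c ≠ 0) {A : Matrix (Fin a) (Fin b) ℝ}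
    (hA : A ∈ rowSparse a b p) : c • A ∈ rowSparse a b p := by
  simpa [rowSparse, hc] using hA

theorem frob_eq_norm {a b : ℕ} (A : Matrix (Fin a) (Fin b) ℝ) : frob A = ‖A‖ := by
  simp [frob, Matrix.frobenius_norm_def, Real.sqrt_eq_rpow]

section Cone

variable {E F : Type*} [NormedAddCommGroup E] [NormedSpace ℝ E] [FiniteDimensional ℝ E]
  [NormedAddCommGroup F] [NormedSpace ℝ F] {S : Set E}

theorem exists_pos_mul_norm_le_norm_of_cone (f : E →ₗ[ℝ] F) (hS : IsClosed S)
    (hcone : ∀ c : ℝ, 0 < c → ∀ x ∈ S, c • x ∈ S)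
    (hker : ∀ x ∈ S, f x = 0 → x = 0) :
    ∃ c > 0, ∀ x ∈ S, c * ‖x‖ ≤ ‖f x‖ := by
  have hK : IsCompact (S ∩ Metric.sphere 0 1) := (isCompact_sphere 0 1).inter_left hS
  obtain ⟨c, hc, hcK⟩ := hK.exists_forall_le' (a := 0)
    (f.continuous_of_finiteDimensional.norm.continuousOn) fun x ⟨hxS, hx1⟩ =>
      norm_pos_iff.2 fun hfx => by simp [hker x hxS hfx] at hx1
  refine ⟨c, hc, fun x hxS => ?_⟩
  rcases eq_or_ne x 0 with rfl | hx
  · simp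
  have hxpos : 0 < ‖x‖ := norm_pos_iff.2 hx
  have hu : ‖x‖⁻¹ • x ∈ S ∩ Metric.sphere 0 1 :=
    ⟨hcone _ (inv_pos.2 hxpos) x hxS, by simp [norm_smul, hxpos.ne']⟩
  calc c * ‖x‖ ≤ ‖f (‖x‖⁻¹ • x)‖ * ‖x‖ := by gcongr; exact hcK _ hu
    _ = ‖f x‖ := by rw [map_smul, norm_smul, norm_inv, norm_norm]; field_simp

theorem isBounded_setOf_norm_sub_le_of_cone (f : E →ₗ[ℝ] F) (hS : IsClosed S)
    (hcone : ∀ c : ℝ, 0 < c → ∀ x ∈ S, c • x ∈ S)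
    (hker : ∀ x ∈ S, f x = 0 → x = 0) (y : F) :
    Bornology.IsBounded {x | x ∈ S ∧ ‖y - f x‖ ≤ ‖y‖} := by
  obtain ⟨c, hc, hbound⟩ := exists_pos_mul_norm_le_norm_of_cone f hS hcone hker
  refine isBounded_iff_forall_norm_le.2 ⟨2 * ‖y‖ / c, fun x ⟨hxS, hxy⟩ => ?_⟩
  rw [le_div_iff₀' hc]
  calc c * ‖x‖ ≤ ‖f x‖ := hbound x hxS
    _ = ‖y - (y - f x)‖ := by rw [sub_sub_cancel]
    _ ≤ ‖y‖ + ‖y - f x‖ := norm_sub_le _ _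
    _ ≤ 2 * ‖y‖ := by linarith

end Cone

theorem stmt_10_general (m n L k p : ℕ)
    (Φ : Matrix (Fin m) (Fin n) ℝ) (Y : Matrix (Fin m) (Fin L) ℝ)
    (hnull : {Θ : Matrix (Fin n) (Fin L) ℝ | Φ * Θ = 0} ∩ colSparse n L k ∩ rowSparse n L p
      = {0})
    (X : ℕ → Matrix (Fin n) (Fin L) ℝ)
    (hX : ∀ i, X i ∈ colSparse n L k ∩ rowSparse n L p)
    (hobj : ∀ i, frob (Y - Φ * X i) ≤ frob Y) :
    (∃ C : ℝ, ∀ i, frob (X i) ≤ C) ∧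
    (∃ (φ : ℕ → ℕ) (Xstar : Matrix (Fin n) (Fin L) ℝ), StrictMono φ ∧
        Filter.Tendsto (X ∘ φ) Filter.atTop (nhds Xstar)) ∧
    (∀ (φ : ℕ → ℕ) (Xstar : Matrix (Fin n) (Fin L) ℝ), StrictMono φ →
        Filter.Tendsto (X ∘ φ) Filter.atTop (nhds Xstar) →
          Xstar ∈ colSparse n L k ∩ rowSparse n L p ∧ frob (Y - Φ * Xstar) ≤ frob Y) := by
  simp only [frob_eq_norm] at hobj ⊢
  set S := colSparse n L k ∩ rowSparse n L p
  set T := {Θ | Θ ∈ S ∧ ‖Y - Φ * Θ‖ ≤ ‖Y‖}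
  have hXT : ∀ i, X i ∈ T := fun i => ⟨hX i, hobj i⟩
  have hS : IsClosed S := (isClosed_colSparse n L k).inter (isClosed_rowSparse n L p)
  have hT : Bornology.IsBounded T :=
    isBounded_setOf_norm_sub_le_of_cone (mulLeftLinearMap _ ℝ Φ) hS
      (fun c hc _ hx => ⟨smul_mem_colSparse hc.ne' hx.1, smul_mem_rowSparse hc.ne' hx.2⟩)
      (fun x hx hΦx => hnull.subset ⟨⟨hΦx, hx.1⟩, hx.2⟩) Y
  have hTclosed : IsClosed T := hS.inter <|
    isClosed_le (f := fun Θ : Matrix (Fin n) (Fin L) ℝ => ‖Y - Φ * Θ‖) (by fun_prop)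
      continuous_const
  refine ⟨?_, ?_, fun φ x _ hx => hTclosed.mem_of_tendsto hx (.of_forall fun i => hXT (φ i))⟩
  · obtain ⟨C, hC⟩ := hT.exists_norm_le
    exact ⟨C, fun i => hC _ (hXT i)⟩
  · obtain ⟨x, -, φ, hφ, hx⟩ := tendsto_subseq_of_bounded hT hXT
    exact ⟨φ, x, hφ, hx⟩

theorem stmt_10 (m n L k p : ℕ) (hm : 0 < m) (hn : 0 < n) (hL : 0 < L)
    (hk : 0 < k) (hp : 0 < p)
    (Φ : Matrix (Fin m) (Fin n) ℝ) (Y : Matrix (Fin m) (Fin L) ℝ)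
    (hnull : {Θ : Matrix (Fin n) (Fin L) ℝ | Φ * Θ = 0} ∩ colSparse n L k ∩ rowSparse n L p
      = {0})
    (X : ℕ → Matrix (Fin n) (Fin L) ℝ)
    (hX : ∀ i, X i ∈ colSparse n L k ∩ rowSparse n L p)
    (hobj : ∀ i, frob (Y - Φ * X i) ≤ frob Y) :
    (∃ C : ℝ, ∀ i, frob (X i) ≤ C) ∧
    (∃ (φ : ℕ → ℕ) (Xstar : Matrix (Fin n) (Fin L) ℝ), StrictMono φ ∧
        Filter.Tendsto (X ∘ φ) Filter.atTop (nhds Xstar)) ∧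
    (∀ (φ : ℕ → ℕ) (Xstar : Matrix (Fin n) (Fin L) ℝ), StrictMono φ →
        Filter.Tendsto (X ∘ φ) Filter.atTop (nhds Xstar) →
          Xstar ∈ colSparse n L k ∩ rowSparse n L p ∧ frob (Y - Φ * Xstar) ≤ frob Y) :=
  stmt_10_general m n L k p Φ Y hnull X hX hobj
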